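/- arXiv:2007.07781 — 4 statements merged into one kernel-verified Lean document; each statement's English description precedes it below -/
import Mathlib

section
/- Let (U_i, V_i), i = 1,…,n, be i.i.d. real random pairs with finite fourth moments, independent of a random sampling-with-replacement sketch Π with probabilities p_i. Then E[n^{−1}(UᵀΠᵀΠV − UᵀV)] = 0 and Var[n^{−1}(UᵀΠᵀΠV − UᵀV)] = {1/m − 1/n + (1 − 1/m) Σ_{i=1}^n p_i²} · Var(U₁V₁). -/
/-!
Let `f_i` be the fraction of the `m` draws that land on `i`. Since `ΠᵀΠ` is the diagonal matrix
with entries `n f_i`, the error is `T = ∑ᵢ cᵢ UᵢVᵢ` with weights `cᵢ = fᵢ - 1/n`. These weights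
sum to zero, so also `T = ∑ᵢ cᵢ Zᵢ` with `Zᵢ = UᵢVᵢ - E[U₁V₁]` centred. The weights are
independent of the pairwise independent `Zᵢ`, hence `E T = 0` and
`E T² = Var(U₁V₁) ∑ᵢ E cᵢ²`. Finally `E cᵢ² = Var fᵢ + (pᵢ - 1/n)²` with
`Var fᵢ = pᵢ(1 - pᵢ)/m` (a sum of `m` pairwise independent Bernoulli variables), and summing
with `∑ᵢ pᵢ = 1` gives the factor `1/m - 1/n + (1 - 1/m) ∑ᵢ pᵢ²`.
-/

open MeasureTheory ProbabilityTheory Matrix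

section WeightedSum

variable {Ω ι : Type*} [MeasurableSpace Ω] {μ : Measure Ω} [Fintype ι] {c Z : ι → Ω → ℝ}

lemma integral_sum_mul_eq_zero_of_indepFun
    (hcZ : IndepFun (fun ω i => c i ω) (fun ω i => Z i ω) μ)
    (hc : ∀ i, Integrable (c i) μ) (hZ : ∀ i, Integrable (Z i) μ) (hZ₀ : ∀ i, μ[Z i] = 0) :
    ∫ ω, ∑ i, c i ω * Z i ω ∂μ = 0 := by
  have hind : ∀ i, IndepFun (c i) (Z i) μ := fun i =>
    hcZ.comp (measurable_pi_apply i) (measurable_pi_apply i)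
  rw [integral_finsetSum (f := fun i ω => c i ω * Z i ω) _
    fun i _ => (hind i).integrable_mul (hc i) (hZ i)]
  refine Finset.sum_eq_zero fun i _ => ?_
  rw [← Pi.mul_def, (hind i).integral_mul_eq_mul_integral (hc i).1 (hZ i).1, hZ₀ i, mul_zero]

lemma variance_sum_mul_of_indepFun [IsFiniteMeasure μ]
    (hcZ : IndepFun (fun ω i => c i ω) (fun ω i => Z i ω) μ)
    (hc : ∀ i, MemLp (c i) 2 μ) (hZ : ∀ i, MemLp (Z i) 2 μ) (hZ₀ : ∀ i, μ[Z i] = 0)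
    (hZZ : Pairwise fun i j => IndepFun (Z i) (Z j) μ) :
    Var[fun ω => ∑ i, c i ω * Z i ω; μ] = ∑ i, μ[c i ^ 2] * μ[Z i ^ 2] := by
  have hind : ∀ i j, IndepFun (c i * c j) (Z i * Z j) μ := fun i j =>
    hcZ.comp ((measurable_pi_apply i).mul (measurable_pi_apply j))
      ((measurable_pi_apply i).mul (measurable_pi_apply j))
  have hint : ∀ i j, Integrable (c i * c j * (Z i * Z j)) μ := fun i j =>
    (hind i j).integrable_mul ((hc i).integrable_mul (hc j)) ((hZ i).integrable_mul (hZ j))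
  have hterm : ∀ i j, μ[c i * c j * (Z i * Z j)] = μ[c i * c j] * μ[Z i * Z j] := fun i j =>
    (hind i j).integral_mul_eq_mul_integral ((hc i).1.mul (hc j).1) ((hZ i).1.mul (hZ j).1)
  have hoff : ∀ i j, j ≠ i → μ[Z i * Z j] = 0 := fun i j hji => by
    rw [(hZZ hji.symm).integral_mul_eq_mul_integral (hZ i).1 (hZ j).1, hZ₀ i, zero_mul]
  have hsq : ∀ ω, (∑ i, c i ω * Z i ω) ^ 2 = ∑ i, ∑ j, (c i * c j * (Z i * Z j)) ω := by
    intro ω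
    simp only [sq, Finset.sum_mul_sum, Pi.mul_apply]
    exact Finset.sum_congr rfl fun _ _ => Finset.sum_congr rfl fun _ _ => by ring
  rw [variance_of_integral_eq_zero (X := fun ω => ∑ i, c i ω * Z i ω)
      (Finset.aemeasurable_fun_sum _ fun i _ => (hc i).aemeasurable.mul (hZ i).aemeasurable)
      (integral_sum_mul_eq_zero_of_indepFun hcZ (fun i => (hc i).integrable one_le_two)
        (fun i => (hZ i).integrable one_le_two) hZ₀)]
  simp_rw [hsq]
  rw [integral_finsetSum _ fun i _ => integrable_finsetSum _ fun j _ => hint i j]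
  refine Finset.sum_congr rfl fun i _ => ?_
  rw [integral_finsetSum _ fun j _ => hint i j, Finset.sum_eq_single_of_mem i (Finset.mem_univ i)
    fun j _ hji => by rw [hterm, hoff i j hji, mul_zero], hterm, ← sq, ← sq]

lemma integral_and_variance_sum_mul_of_sum_eq_zero [IsProbabilityMeasure μ] {W : ι → Ω → ℝ}
    (hcW : IndepFun (fun ω i => c i ω) (fun ω i => W i ω) μ)
    (hc : ∀ i, MemLp (c i) 2 μ) (hW : ∀ i, MemLp (W i) 2 μ) {i₀ : ι}
    (hident : ∀ i, IdentDistrib (W i) (W i₀) μ μ) (hWW : Pairwise fun i j => IndepFun (W i) (W j) μ)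
    (hc_sum : ∀ ω, ∑ i, c i ω = 0) :
    ∫ ω, ∑ i, c i ω * W i ω ∂μ = 0 ∧
      Var[fun ω => ∑ i, c i ω * W i ω; μ] = (∑ i, ∫ ω, c i ω ^ 2 ∂μ) * Var[W i₀; μ] := by
  set Z : ι → Ω → ℝ := fun i ω => W i ω - μ[W i₀]
  have hcentre : (fun ω => ∑ i, c i ω * W i ω) = fun ω => ∑ i, c i ω * Z i ω := by
    ext ω
    simp only [Z, mul_sub, Finset.sum_sub_distrib, ← Finset.sum_mul, hc_sum, zero_mul, sub_zero]
  have hZ : ∀ i, MemLp (Z i) 2 μ := fun i => (hW i).sub (memLp_const _)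
  have hZ₀ : ∀ i, μ[Z i] = 0 := fun i => by
    rw [integral_sub ((hW i).integrable one_le_two) (integrable_const _), (hident i).integral_eq,
      integral_const, probReal_univ, one_smul, sub_self]
  have hZ_sq : ∀ i, μ[Z i ^ 2] = Var[W i₀; μ] := fun i => by
    rw [← (hident i).variance_eq, variance_eq_integral (hW i).aemeasurable, (hident i).integral_eq]
    rfl
  have hcZ : IndepFun (fun ω i => c i ω) (fun ω i => Z i ω) μ :=
    hcW.comp measurable_id (measurable_pi_lambda _ fun i => (measurable_pi_apply i).sub_const _)
  have hZZ : Pairwise fun i j => IndepFun (Z i) (Z j) μ := fun i j hij =>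
    (hWW hij).comp (measurable_id.sub_const _) (measurable_id.sub_const _)
  rw [hcentre, variance_sum_mul_of_indepFun hcZ hc hZ hZ₀ hZZ, Finset.sum_mul]
  simp_rw [hZ_sq]
  exact ⟨integral_sum_mul_eq_zero_of_indepFun hcZ (fun i => (hc i).integrable one_le_two)
    (fun i => (hZ i).integrable one_le_two) hZ₀, rfl⟩

end WeightedSum

lemma variance_indicator_one {Ω : Type*} [MeasurableSpace Ω] {μ : Measure Ω}
    [IsProbabilityMeasure μ] {s : Set Ω} (hs : MeasurableSet s) :
    Var[s.indicator 1; μ] = μ.real s * (1 - μ.real s) := by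
  have hsq : s.indicator (1 : Ω → ℝ) ^ 2 = s.indicator 1 := by
    ext ω; by_cases h : ω ∈ s <;> simp [h]
  have hL2 : MemLp (s.indicator (1 : Ω → ℝ)) 2 μ := (memLp_const 1).indicator hs
  rw [variance_eq_sub hL2, hsq, integral_indicator_one hs]
  ring

lemma integral_sub_const_sq {Ω : Type*} [MeasurableSpace Ω] {μ : Measure Ω}
    [IsProbabilityMeasure μ] {X : Ω → ℝ} (hX : MemLp X 2 μ) (r : ℝ) :
    ∫ ω, (X ω - r) ^ 2 ∂μ = Var[X; μ] + (μ[X] - r) ^ 2 := by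
  have h := variance_eq_sub (X := fun ω => X ω - r) (hX.sub (memLp_const r))
  rw [variance_sub_const hX.1, integral_sub (hX.integrable one_le_two) (integrable_const r),
    integral_const, probReal_univ, one_smul] at h
  rw [h, sub_add_cancel]
  rfl

lemma ite_eq_indicator_one {Ω ι : Type*} [DecidableEq ι] (f : Ω → ι) (i : ι) :
    (fun ω => if f ω = i then (1 : ℝ) else 0) = {ω | f ω = i}.indicator 1 := by
  ext ω; simp [Set.indicator_apply]

lemma sum_measureReal_fiber_eq_one {Ω ι : Type*} [MeasurableSpace Ω] {μ : Measure Ω}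
    [IsProbabilityMeasure μ] [Fintype ι] [MeasurableSpace ι] [MeasurableSingletonClass ι]
    {f : Ω → ι} (hf : Measurable f) : ∑ i, μ.real {ω | f ω = i} = 1 :=
  (sum_measureReal_preimage_singleton (μ := μ) Finset.univ
    fun i _ => hf (measurableSet_singleton i)).trans (by simp)

section SampleFreq

variable {m : ℕ} {ι : Type*} [DecidableEq ι]

noncomputable def sampleFreq (k : Fin m → ι) (i : ι) : ℝ :=
  (m : ℝ)⁻¹ * ∑ t, if k t = i then 1 else 0

lemma sum_sampleFreq_mul [Fintype ι] (k : Fin m → ι) (g : ι → ℝ) :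
    ∑ i, sampleFreq k i * g i = (m : ℝ)⁻¹ * ∑ t, g (k t) := by
  simp only [sampleFreq, mul_assoc, ← Finset.mul_sum, Finset.sum_mul, ite_mul, one_mul, zero_mul]
  rw [Finset.sum_comm]
  simp

lemma sum_sampleFreq [Fintype ι] (hm : m ≠ 0) (k : Fin m → ι) : ∑ i, sampleFreq k i = 1 := by
  simpa [hm] using sum_sampleFreq_mul k 1

lemma sampleFreq_eq_sum_indicator {Ω : Type*} (idx : Fin m → Ω → ι) (i : ι) :
    (fun ω => sampleFreq (idx · ω) i)
      = fun ω => (m : ℝ)⁻¹ * ∑ t, {ω | idx t ω = i}.indicator 1 ω := by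
  simp only [sampleFreq, ← ite_eq_indicator_one]

variable {Ω : Type*} [MeasurableSpace Ω] {μ : Measure Ω} [IsProbabilityMeasure μ]
  [MeasurableSpace ι] [MeasurableSingletonClass ι] {idx : Fin m → Ω → ι} {i : ι} {q : ℝ}

lemma memLp_sampleFreq (hidx : ∀ t, Measurable (idx t)) (r : ENNReal) :
    MemLp (fun ω => sampleFreq (idx · ω) i) r μ := by
  have hχ : ∀ t, MemLp ({ω | idx t ω = i}.indicator (1 : Ω → ℝ)) r μ := fun t =>
    (memLp_const 1).indicator (hidx t (measurableSet_singleton i))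
  rw [sampleFreq_eq_sum_indicator]
  exact (memLp_finsetSum _ fun t _ => hχ t).const_mul _

lemma integral_sampleFreq (hm : m ≠ 0) (hidx : ∀ t, Measurable (idx t))
    (hp : ∀ t, μ.real {ω | idx t ω = i} = q) :
    μ[fun ω => sampleFreq (idx · ω) i] = q := by
  have hset : ∀ t, MeasurableSet {ω | idx t ω = i} := fun t => hidx t (measurableSet_singleton i)
  rw [sampleFreq_eq_sum_indicator, integral_const_mul,
    integral_finsetSum _ fun t _ => (integrable_const 1).indicator (hset t)]
  simp [integral_indicator_one (hset _), hp, hm]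

lemma variance_sampleFreq (hidx : ∀ t, Measurable (idx t))
    (hind : Pairwise fun t t' => IndepFun (idx t) (idx t') μ)
    (hp : ∀ t, μ.real {ω | idx t ω = i} = q) :
    Var[fun ω => sampleFreq (idx · ω) i; μ] = q * (1 - q) / m := by
  have hset : ∀ t, MeasurableSet {ω | idx t ω = i} := fun t => hidx t (measurableSet_singleton i)
  have hsum : Var[∑ t, {ω | idx t ω = i}.indicator (1 : Ω → ℝ); μ] = m * (q * (1 - q)) := by
    rw [IndepFun.variance_sum (X := fun t => {ω | idx t ω = i}.indicator (1 : Ω → ℝ))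
      (fun t _ => (memLp_const 1).indicator (hset t))
      fun t _ t' _ htt' => (hind htt').comp (φ := ({i} : Set ι).indicator (1 : ι → ℝ))
        (ψ := ({i} : Set ι).indicator 1) (measurable_one.indicator (measurableSet_singleton i))
        (measurable_one.indicator (measurableSet_singleton i))]
    simp [variance_indicator_one (hset _), hp]
  rw [sampleFreq_eq_sum_indicator, variance_const_mul, ← Finset.sum_fn, hsum]
  rcases eq_or_ne (m : ℝ) 0 with hm | hm
  · simp [hm]
  · field_simp

lemma sum_integral_sq_sampleFreq_sub_inv {n : ℕ} [NeZero n] (hm : m ≠ 0)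
    {idx : Fin m → Ω → Fin n} (hidx : ∀ t, Measurable (idx t))
    (hind : Pairwise fun t t' => IndepFun (idx t) (idx t') μ) {p : Fin n → ℝ}
    (hp : ∀ t i, μ.real {ω | idx t ω = i} = p i) :
    ∑ i, μ[fun ω => (sampleFreq (idx · ω) i - (n : ℝ)⁻¹) ^ 2]
      = 1 / m - 1 / n + (1 - 1 / m) * ∑ i, p i ^ 2 := by
  have hpsum : ∑ i, p i = 1 := by
    rw [← sum_measureReal_fiber_eq_one (μ := μ) (hidx ⟨0, Nat.pos_of_ne_zero hm⟩)]
    simp only [hp]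
  have hmoment : ∀ i, μ[fun ω => (sampleFreq (idx · ω) i - (n : ℝ)⁻¹) ^ 2]
      = p i * (1 - p i) / m + (p i - (n : ℝ)⁻¹) ^ 2 := by
    intro i
    rw [integral_sub_const_sq (memLp_sampleFreq hidx 2), variance_sampleFreq hidx hind (hp · i),
      integral_sampleFreq hm hidx (hp · i)]
  have hn : (n : ℝ) ≠ 0 := Nat.cast_ne_zero.2 (NeZero.ne n)
  simp_rw [hmoment, fun i => show p i * (1 - p i) / m + (p i - (n : ℝ)⁻¹) ^ 2
    = p i * (1 / m - 2 / n) + (1 - 1 / m) * p i ^ 2 + 1 / n ^ 2 by ring]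
  simp only [Finset.sum_add_distrib, ← Finset.sum_mul, ← Finset.mul_sum, hpsum,
    Finset.sum_const, Finset.card_univ, Fintype.card_fin, nsmul_eq_mul]
  field_simp
  ring

end SampleFreq

lemma mulVec_eq_of_sampling {τ ι : Type*} [Fintype ι] [DecidableEq ι] {P : Matrix τ ι ℝ}
    {k : τ → ι} {s : ℝ} (hP : ∀ t i, P t i = if k t = i then s else 0) (x : ι → ℝ) :
    P *ᵥ x = fun t => s * x (k t) := by
  ext t
  simp [mulVec, dotProduct, hP, ite_mul]

lemma sketch_error_eq_sum_sampleFreq {m n : ℕ} [NeZero n] {P : Matrix (Fin m) (Fin n) ℝ}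
    {k : Fin m → Fin n} (hP : ∀ t i, P t i = if k t = i then √((n : ℝ) / m) else 0)
    (x y : Fin n → ℝ) :
    (n : ℝ)⁻¹ * ((P *ᵥ x) ⬝ᵥ (P *ᵥ y) - x ⬝ᵥ y)
      = ∑ i, (sampleFreq k i - (n : ℝ)⁻¹) * (x i * y i) := by
  have hn : (n : ℝ) ≠ 0 := Nat.cast_ne_zero.2 (NeZero.ne n)
  have hsketch : (P *ᵥ x) ⬝ᵥ (P *ᵥ y) = n * ∑ i, sampleFreq k i * (x i * y i) := by
    have hs : √((n : ℝ) / m) * √((n : ℝ) / m) = n / m := Real.mul_self_sqrt (by positivity)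
    rw [mulVec_eq_of_sampling hP, mulVec_eq_of_sampling hP, sum_sampleFreq_mul, dotProduct,
      ← mul_assoc, ← div_eq_mul_inv, Finset.mul_sum]
    exact Finset.sum_congr rfl fun t _ => by linear_combination (x (k t) * y (k t)) * hs
  rw [hsketch, dotProduct]
  simp only [sub_mul, Finset.sum_sub_distrib, ← Finset.mul_sum]
  field_simp

lemma memLp_two_mul_of_memLp_four {Ω : Type*} [MeasurableSpace Ω] {μ : Measure Ω}
    {f g : Ω → ℝ} (hf : MemLp f 4 μ) (hg : MemLp g 4 μ) : MemLp (fun ω => f ω * g ω) 2 μ := by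
  have : ENNReal.HolderTriple 4 4 2 := ⟨by
    rw [show (4 : ENNReal) = 2 * 2 by norm_num, ENNReal.mul_inv (by simp) (by simp), ← mul_add,
      ENNReal.inv_two_add_inv_two, mul_one]⟩
  exact hg.mul' hf

theorem rs_sketching_error_moments_general
    {Ω : Type*} [MeasurableSpace Ω] (μ : Measure Ω) [IsProbabilityMeasure μ]
    (m n : ℕ) (hm : 0 < m) [NeZero n]
    (idx : Fin m → Ω → Fin n) (hidx_meas : ∀ t, Measurable (idx t))
    (p : Fin n → ℝ)
    (hp : ∀ t i, (μ {ω | idx t ω = i}).toReal = p i)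
    (hiid : ∀ t t', t ≠ t' → IndepFun (idx t) (idx t') μ)
    (U V : Fin n → Ω → ℝ)
    (hUV_indep : iIndepFun (fun i ω => (U i ω, V i ω)) μ)
    (hUV_ident : ∀ i, IdentDistrib (fun ω => (U i ω, V i ω))
      (fun ω => (U 0 ω, V 0 ω)) μ μ)
    (hU4 : ∀ i, MemLp (U i) 4 μ) (hV4 : ∀ i, MemLp (V i) 4 μ)
    (hindep_data : IndepFun (fun ω (t : Fin m) => idx t ω)
      (fun ω (i : Fin n) => (U i ω, V i ω)) μ)
    (Pm : Ω → Matrix (Fin m) (Fin n) ℝ)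
    (hPm : ∀ ω t i, Pm ω t i = if idx t ω = i then Real.sqrt ((n : ℝ) / m) else 0)
    (T : Ω → ℝ)
    (hT : ∀ ω, T ω = (n : ℝ)⁻¹ *
      ((Pm ω *ᵥ fun i => U i ω) ⬝ᵥ (Pm ω *ᵥ fun i => V i ω)
        - (fun i => U i ω) ⬝ᵥ (fun i => V i ω))) :
    (∫ ω, T ω ∂μ) = 0 ∧
    variance T μ =
      (1 / m - 1 / n + (1 - 1 / m) * ∑ i, (p i) ^ 2) *
        variance (fun ω => U 0 ω * V 0 ω) μ := by
  set W : Fin n → Ω → ℝ := fun i ω => U i ω * V i ω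
  set c : Fin n → Ω → ℝ := fun i ω => sampleFreq (idx · ω) i - (n : ℝ)⁻¹
  have hcW : IndepFun (fun ω i => c i ω) (fun ω i => W i ω) μ := by
    have := hindep_data.comp (φ := fun k i => sampleFreq k i - (n : ℝ)⁻¹)
      (ψ := fun x i => (x i).1 * (x i).2) (measurable_of_countable _)
      (measurable_pi_lambda _ fun i => (measurable_pi_apply i).fst.mul (measurable_pi_apply i).snd)
    exact this
  have hc_sum : ∀ ω, ∑ i, c i ω = 0 := fun ω => by
    simp [c, Finset.sum_sub_distrib, sum_sampleFreq hm.ne']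
  have hT_eq : T = fun ω => ∑ i, c i ω * W i ω :=
    funext fun ω => by rw [hT, sketch_error_eq_sum_sampleFreq (hPm ω)]
  obtain ⟨hmean, hvar⟩ := integral_and_variance_sum_mul_of_sum_eq_zero hcW
    (fun i => (memLp_sampleFreq hidx_meas 2).sub (memLp_const _))
    (fun i => memLp_two_mul_of_memLp_four (hU4 i) (hV4 i))
    (fun i => (hUV_ident i).comp (measurable_fst.mul measurable_snd))
    (fun i j hij => (hUV_indep.indepFun hij).comp (measurable_fst.mul measurable_snd)
      (measurable_fst.mul measurable_snd)) hc_sum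
  refine ⟨hT_eq ▸ hmean, ?_⟩
  rw [hT_eq, hvar, sum_integral_sq_sampleFreq_sub_inv hm.ne' hidx_meas hiid hp]

/-- **Mean and variance of the sketching error under random sampling with
replacement.**  `(U_i, V_i)` are i.i.d. pairs with finite fourth moments,
independent of the sketch `Π = √(n/m)(ι_{k₁},…,ι_{k_m})ᵀ` whose i.i.d. row
indices have `P(k_t = i) = p_i`.  Then `E[n⁻¹(UᵀΠᵀΠV − UᵀV)] = 0` and
`Var[n⁻¹(UᵀΠᵀΠV − UᵀV)] = {1/m − 1/n + (1 − 1/m) Σ_i p_i²} · Var(U₁V₁)`. -/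
theorem rs_sketching_error_moments
    {Ω : Type*} [MeasurableSpace Ω] (μ : Measure Ω) [IsProbabilityMeasure μ]
    (m n : ℕ) (hm : 0 < m) [NeZero n]
    (idx : Fin m → Ω → Fin n) (hidx_meas : ∀ t, Measurable (idx t))
    (p : Fin n → ℝ)
    (hp : ∀ t i, (μ {ω | idx t ω = i}).toReal = p i)
    (hiid : ∀ t t', t ≠ t' → IndepFun (idx t) (idx t') μ)
    (U V : Fin n → Ω → ℝ)
    (hU_meas : ∀ i, Measurable (U i)) (hV_meas : ∀ i, Measurable (V i))
    (hUV_indep : iIndepFun (fun i ω => (U i ω, V i ω)) μ)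
    (hUV_ident : ∀ i, IdentDistrib (fun ω => (U i ω, V i ω))
      (fun ω => (U 0 ω, V 0 ω)) μ μ)
    (hU4 : ∀ i, MemLp (U i) 4 μ) (hV4 : ∀ i, MemLp (V i) 4 μ)
    (hindep_data : IndepFun (fun ω (t : Fin m) => idx t ω)
      (fun ω (i : Fin n) => (U i ω, V i ω)) μ)
    (Pm : Ω → Matrix (Fin m) (Fin n) ℝ)
    (hPm : ∀ ω t i, Pm ω t i = if idx t ω = i then Real.sqrt ((n : ℝ) / m) else 0)
    (T : Ω → ℝ)
    (hT : ∀ ω, T ω = (n : ℝ)⁻¹ *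
      ((Pm ω *ᵥ fun i => U i ω) ⬝ᵥ (Pm ω *ᵥ fun i => V i ω)
        - (fun i => U i ω) ⬝ᵥ (fun i => V i ω))) :
    (∫ ω, T ω ∂μ) = 0 ∧
    variance T μ =
      (1 / m - 1 / n + (1 - 1 / m) * ∑ i, (p i) ^ 2) *
        variance (fun ω => U 0 ω * V 0 ω) μ :=
  rs_sketching_error_moments_general μ m n hm idx hidx_meas p hp hiid U V hUV_indep hUV_ident hU4
    hV4 hindep_data Pm hPm T hT
end

section
/- Under uniform sampling with replacement (p_i = 1/n for all i), Var[n^{−1}(UᵀΠᵀΠV − UᵀV)] = ((n−1)/n) · (1/m) · Var(U₁V₁). -/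
/-!
Write `W i = U i * V i` and `D i = W i - W̄` for the centred values. The sketching error is the
sample mean `m⁻¹ ∑ t, D (k t)` of the centred values at the `m` uniform indices `k t`. Since
`∑ i, D i = 0` and the indices are independent of the data, `E[D (k t)] = 0` and, for `t ≠ t'`,
`E[D (k t) * D (k t')] = n⁻² E[(∑ i, D i)²] = 0`. Only the `m` diagonal terms
`E[D (k t)²] = n⁻¹ E[∑ i, D i²]` survive, and `E[∑ i, D i²] = (n - 1) Var(W 0)` is the
unbiasedness of the sample variance.
-/

open MeasureTheory ProbabilityTheory Matrix
open scoped ENNReal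

instance : ENNReal.HolderTriple 4 4 2 where
  inv_add_inv_eq_inv := by
    rw [← two_mul, show (4 : ℝ≥0∞) = 2 * 2 by norm_num, ENNReal.mul_inv (by simp) (by simp),
      ← mul_assoc, ENNReal.mul_inv_cancel (by simp) (by simp), one_mul]

open Finset in
lemma sum_sq_sub_mean {ι : Type*} [Fintype ι] (x : ι → ℝ) :
    ∑ i, (x i - (Fintype.card ι : ℝ)⁻¹ * ∑ j, x j) ^ 2
      = ∑ i, x i ^ 2 - (Fintype.card ι : ℝ)⁻¹ * (∑ i, x i) ^ 2 := by
  rcases isEmpty_or_nonempty ι with hι | hι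
  · simp
  have hcard : (Fintype.card ι : ℝ) ≠ 0 := by positivity
  simp only [sub_sq, sum_add_distrib, sum_sub_distrib, ← sum_mul, ← mul_sum, sum_const,
    card_univ, nsmul_eq_mul]
  field_simp
  ring

theorem integral_sum_sq_sub_mean_eq {Ω ι : Type*} [MeasurableSpace Ω] {μ : Measure Ω}
    [IsFiniteMeasure μ] [Fintype ι] {W : ι → Ω → ℝ} (i₀ : ι)
    (hW : ∀ i, MemLp (W i) 2 μ) (hindep : Pairwise fun i j => IndepFun (W i) (W j) μ)
    (hident : ∀ i, IdentDistrib (W i) (W i₀) μ μ) :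
    ∫ ω, ∑ i, (W i ω - (Fintype.card ι : ℝ)⁻¹ * ∑ j, W j ω) ^ 2 ∂μ
      = ((Fintype.card ι : ℝ) - 1) * variance (W i₀) μ := by
  have : Nonempty ι := ⟨i₀⟩
  set a := μ[W i₀]
  set n := (Fintype.card ι : ℝ) with hn_def
  have hn : n ≠ 0 := Nat.cast_ne_zero.mpr Fintype.card_ne_zero
  have hshift : ∀ ω, ∑ i, (W i ω - n⁻¹ * ∑ j, W j ω) ^ 2
      = ∑ i, (W i ω - a) ^ 2 - n⁻¹ * (∑ j, W j ω - n * a) ^ 2 := by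
    intro ω
    have h := sum_sq_sub_mean (fun i => W i ω - a)
    simp only [Finset.sum_sub_distrib, Finset.sum_const, Finset.card_univ, nsmul_eq_mul] at h
    rw [← hn_def] at h
    rw [← h]
    refine Finset.sum_congr rfl fun i _ => ?_
    field_simp
    ring
  have hvar : ∀ i, ∫ ω, (W i ω - a) ^ 2 ∂μ = variance (W i₀) μ := fun i => by
    rw [← (hident i).variance_eq, variance_eq_integral (hW i).aemeasurable, (hident i).integral_eq]
  have hvar_sum : ∫ ω, (∑ j, W j ω - n * a) ^ 2 ∂μ = n * variance (W i₀) μ := by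
    have hadd := IndepFun.variance_sum (s := Finset.univ) (fun i _ => hW i)
      fun i _ j _ hij => hindep hij
    rw [variance_eq_integral (memLp_finsetSum' _ fun i _ => hW i).aemeasurable] at hadd
    simp_rw [Finset.sum_apply] at hadd
    rw [integral_finsetSum _ fun i _ => (hW i).integrable one_le_two] at hadd
    simp_rw [(hident _).integral_eq, (hident _).variance_eq] at hadd
    simpa [n] using hadd
  have hsq : ∀ i, Integrable (fun ω => (W i ω - a) ^ 2) μ := fun i =>
    ((hW i).sub (memLp_const a)).integrable_sq
  have hsq_sum : Integrable (fun ω => n⁻¹ * (∑ j, W j ω - n * a) ^ 2) μ :=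
    ((memLp_finsetSum _ fun i _ => hW i).sub (memLp_const _)).integrable_sq.const_mul _
  simp_rw [hshift]
  rw [integral_sub (integrable_finsetSum _ fun i _ => hsq i) hsq_sum,
    integral_finsetSum _ fun i _ => hsq i, integral_const_mul, hvar_sum]
  simp_rw [hvar]
  simp only [Finset.sum_const, Finset.card_univ, nsmul_eq_mul, ← hn_def]
  field_simp

lemma mulVec_apply_of_eq_ite {R m n : Type*} [Fintype n] [DecidableEq n] [NonAssocSemiring R]
    {k : m → n} {c : R} {P : Matrix m n R} (hP : ∀ t i, P t i = if k t = i then c else 0)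
    (u : n → R) (t : m) : (P *ᵥ u) t = c * u (k t) := by
  simp [mulVec, dotProduct, hP, ite_mul]

lemma mulVec_dotProduct_mulVec_of_eq_ite {R m n : Type*} [Fintype m] [Fintype n] [DecidableEq n]
    [CommSemiring R] {k : m → n} {c : R} {P : Matrix m n R}
    (hP : ∀ t i, P t i = if k t = i then c else 0) (u v : n → R) :
    (P *ᵥ u) ⬝ᵥ (P *ᵥ v) = c ^ 2 * ∑ t, u (k t) * v (k t) := by
  simp only [dotProduct, mulVec_apply_of_eq_ite hP, Finset.mul_sum]
  exact Finset.sum_congr rfl fun _ _ => by ring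

lemma apply_eq_sum_indicator {Ω ι : Type*} [Fintype ι] (k : Ω → ι) (Y : Ω → ι → ℝ) (ω : Ω) :
    Y ω (k ω) = ∑ i, (k ⁻¹' {i}).indicator (fun ω => Y ω i) ω := by
  classical
  simp [Set.indicator_apply]

lemma IndepFun.measureReal_prodMk_preimage_singleton {Ω α β : Type*} [MeasurableSpace Ω]
    {μ : Measure Ω} [MeasurableSpace α] [MeasurableSingletonClass α] [MeasurableSpace β]
    [MeasurableSingletonClass β] {k : Ω → α} {k' : Ω → β} (hind : IndepFun k k' μ) (a : α) (b : β) :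
    μ.real ((fun ω => (k ω, k' ω)) ⁻¹' {(a, b)}) = μ.real (k ⁻¹' {a}) * μ.real (k' ⁻¹' {b}) := by
  have hpre : (fun ω => (k ω, k' ω)) ⁻¹' {(a, b)} = k ⁻¹' {a} ∩ k' ⁻¹' {b} := by
    ext ω; simp
  rw [hpre, measureReal_def, hind.measure_inter_preimage_eq_mul _ _ (measurableSet_singleton _)
    (measurableSet_singleton _), ENNReal.toReal_mul, measureReal_def, measureReal_def]

section Sampling

variable {Ω ι : Type*} [MeasurableSpace Ω] {μ : Measure Ω}
  [Fintype ι] [MeasurableSpace ι] [MeasurableSingletonClass ι]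

lemma integrable_apply {k : Ω → ι} {Y : Ω → ι → ℝ} (hk : Measurable k)
    (hY : ∀ i, Integrable (fun ω => Y ω i) μ) : Integrable (fun ω => Y ω (k ω)) μ := by
  simp_rw [apply_eq_sum_indicator k Y]
  exact integrable_finsetSum _ fun i _ => (hY i).indicator (hk (measurableSet_singleton i))

lemma integral_apply_eq_sum_of_indepFun {k : Ω → ι} {Y : Ω → ι → ℝ} (hk : Measurable k)
    (hY : AEMeasurable Y μ) (hYint : ∀ i, Integrable (fun ω => Y ω i) μ)
    (hind : IndepFun k Y μ) :
    ∫ ω, Y ω (k ω) ∂μ = ∑ i, μ.real (k ⁻¹' {i}) * ∫ ω, Y ω i ∂μ := by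
  simp_rw [apply_eq_sum_indicator k Y]
  rw [integral_finsetSum _ fun i _ => (hYint i).indicator (hk (measurableSet_singleton i))]
  refine Finset.sum_congr rfl fun i _ => ?_
  have hfactor := hind.integral_fun_comp_mul_comp (f := ({i} : Set ι).indicator (1 : ι → ℝ))
    (g := fun y => y i) hk.aemeasurable hY
    (measurable_one.indicator (measurableSet_singleton i)).aestronglyMeasurable
    (measurable_pi_apply i).aestronglyMeasurable
  have hind_eq : ∀ ω, (k ⁻¹' {i}).indicator (fun ω => Y ω i) ω
      = ({i} : Set ι).indicator (1 : ι → ℝ) (k ω) * Y ω i := fun ω => by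
    by_cases h : k ω = i <;> simp [h]
  simp_rw [hind_eq, hfactor, ← integral_indicator_one (hk (measurableSet_singleton i))]
  rfl

lemma integral_apply_eq_of_indepFun_of_uniform {k : Ω → ι} {Y : Ω → ι → ℝ} (hk : Measurable k)
    (hunif : ∀ i, μ.real (k ⁻¹' {i}) = (Fintype.card ι : ℝ)⁻¹)
    (hY : AEMeasurable Y μ) (hYint : ∀ i, Integrable (fun ω => Y ω i) μ)
    (hind : IndepFun k Y μ) :
    ∫ ω, Y ω (k ω) ∂μ = (Fintype.card ι : ℝ)⁻¹ * ∫ ω, ∑ i, Y ω i ∂μ := by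
  rw [integral_apply_eq_sum_of_indepFun hk hY hYint hind, integral_finsetSum _ fun i _ => hYint i,
    Finset.mul_sum]
  simp only [hunif]

theorem variance_sampling_mean_of_sum_eq_zero [IsFiniteMeasure μ] {τ : Type*} [Fintype τ]
    {k : τ → Ω → ι} (hk : ∀ t, Measurable (k t))
    (hunif : ∀ t i, μ.real (k t ⁻¹' {i}) = (Fintype.card ι : ℝ)⁻¹)
    (hpair : Pairwise fun t t' => IndepFun (k t) (k t') μ)
    {Y : Ω → ι → ℝ} (hY : AEMeasurable Y μ) (hY2 : ∀ i, MemLp (fun ω => Y ω i) 2 μ)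
    (hind : IndepFun (fun ω t => k t ω) Y μ) (hsum : ∀ ω, ∑ i, Y ω i = 0) :
    variance (fun ω => (Fintype.card τ : ℝ)⁻¹ * ∑ t, Y ω (k t ω)) μ
      = (Fintype.card τ : ℝ)⁻¹ * (Fintype.card ι : ℝ)⁻¹ * ∫ ω, ∑ i, Y ω i ^ 2 ∂μ := by
  classical
  have hYint : ∀ i, Integrable (fun ω => Y ω i) μ := fun i => (hY2 i).integrable one_le_two
  have hindt : ∀ t, IndepFun (k t) Y μ := fun t => hind.comp (measurable_pi_apply t) measurable_id
  have hYk : ∀ t, Integrable (fun ω => Y ω (k t ω)) μ := fun t => integrable_apply (hk t) hYint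
  have hYkYk : ∀ t t', Integrable (fun ω => Y ω (k t ω) * Y ω (k t' ω)) μ := fun t t' =>
    integrable_apply (Y := fun ω (p : ι × ι) => Y ω p.1 * Y ω p.2) ((hk t).prodMk (hk t'))
      fun p => (hY2 p.1).integrable_mul (hY2 p.2)
  have hmean : ∫ ω, (Fintype.card τ : ℝ)⁻¹ * ∑ t, Y ω (k t ω) ∂μ = 0 := by
    simp_rw [integral_const_mul, integral_finsetSum _ fun t _ => hYk t,
      integral_apply_eq_of_indepFun_of_uniform (hk _) (hunif _) hY hYint (hindt _), hsum]
    simp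
  have hsecond : ∀ t t', ∫ ω, Y ω (k t ω) * Y ω (k t' ω) ∂μ
      = if t = t' then (Fintype.card ι : ℝ)⁻¹ * ∫ ω, ∑ i, Y ω i ^ 2 ∂μ else 0 := by
    intro t t'
    split_ifs with htt'
    · subst htt'
      simp_rw [← sq]
      exact integral_apply_eq_of_indepFun_of_uniform (Y := fun ω i => Y ω i ^ 2) (hk t) (hunif t)
        (hY.pow_const 2) (fun i => (hY2 i).integrable_sq)
        ((hindt t).comp (ψ := fun (y : ι → ℝ) i => y i ^ 2) measurable_id (by fun_prop))
    · have hunif₂ : ∀ p : ι × ι, μ.real ((fun ω => (k t ω, k t' ω)) ⁻¹' {p})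
          = (Fintype.card (ι × ι) : ℝ)⁻¹ := by
        rintro ⟨a, b⟩
        rw [IndepFun.measureReal_prodMk_preimage_singleton (hpair htt'), hunif, hunif,
          Fintype.card_prod, Nat.cast_mul, mul_inv]
      rw [integral_apply_eq_of_indepFun_of_uniform (Y := fun ω p => Y ω p.1 * Y ω p.2)
        ((hk t).prodMk (hk t')) hunif₂ (by fun_prop)
        (fun p => (hY2 p.1).integrable_mul (hY2 p.2))
        (hind.comp (φ := fun κ : τ → ι => (κ t, κ t'))
          (ψ := fun (y : ι → ℝ) (p : ι × ι) => y p.1 * y p.2) (by fun_prop) (by fun_prop))]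
      simp_rw [Fintype.sum_prod_type, ← Finset.mul_sum, ← Finset.sum_mul, hsum]
      simp
  have hZ : Integrable (fun ω => (Fintype.card τ : ℝ)⁻¹ * ∑ t, Y ω (k t ω)) μ :=
    (integrable_finsetSum _ fun t _ => hYk t).const_mul _
  rw [variance_of_integral_eq_zero hZ.aemeasurable hmean]
  calc ∫ ω, ((Fintype.card τ : ℝ)⁻¹ * ∑ t, Y ω (k t ω)) ^ 2 ∂μ
      = ∫ ω, (Fintype.card τ : ℝ)⁻¹ ^ 2 * ∑ t, ∑ t', Y ω (k t ω) * Y ω (k t' ω) ∂μ := by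
        simp_rw [mul_pow, sq, Finset.sum_mul_sum]
    _ = (Fintype.card τ : ℝ)⁻¹ ^ 2 * ∑ t, ∑ t', ∫ ω, Y ω (k t ω) * Y ω (k t' ω) ∂μ := by
        rw [integral_const_mul, integral_finsetSum _ fun t _ =>
          integrable_finsetSum _ fun t' _ => hYkYk t t']
        simp_rw [integral_finsetSum _ fun t' _ => hYkYk _ t']
    _ = _ := by
        simp_rw [hsecond, Finset.sum_ite_eq, Finset.mem_univ, if_true, Finset.sum_const,
          Finset.card_univ, nsmul_eq_mul]
        rcases eq_or_ne (Fintype.card τ : ℝ) 0 with h | h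
        · simp [h]
        · field_simp

end Sampling

theorem uniform_rs_sketching_error_variance_general
    {Ω : Type*} [MeasurableSpace Ω] (μ : Measure Ω) [IsProbabilityMeasure μ]
    (m n : ℕ) (hm : 0 < m) [NeZero n]
    (idx : Fin m → Ω → Fin n) (hidx_meas : ∀ t, Measurable (idx t))
    (hp : ∀ t i, (μ {ω | idx t ω = i}).toReal = 1 / n)
    (hiid : ∀ t t', t ≠ t' → IndepFun (idx t) (idx t') μ)
    (U V : Fin n → Ω → ℝ)
    (hUV_indep : iIndepFun (fun i ω => (U i ω, V i ω)) μ)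
    (hUV_ident : ∀ i, IdentDistrib (fun ω => (U i ω, V i ω))
      (fun ω => (U 0 ω, V 0 ω)) μ μ)
    (hU4 : ∀ i, MemLp (U i) 4 μ) (hV4 : ∀ i, MemLp (V i) 4 μ)
    (hindep_data : IndepFun (fun ω (t : Fin m) => idx t ω)
      (fun ω (i : Fin n) => (U i ω, V i ω)) μ)
    (Pm : Ω → Matrix (Fin m) (Fin n) ℝ)
    (hPm : ∀ ω t i, Pm ω t i = if idx t ω = i then Real.sqrt ((n : ℝ) / m) else 0)
    (T : Ω → ℝ)
    (hT : ∀ ω, T ω = (n : ℝ)⁻¹ *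
      ((Pm ω *ᵥ fun i => U i ω) ⬝ᵥ (Pm ω *ᵥ fun i => V i ω)
        - (fun i => U i ω) ⬝ᵥ (fun i => V i ω))) :
    variance T μ =
      (((n : ℝ) - 1) / n) * (1 / m) * variance (fun ω => U 0 ω * V 0 ω) μ := by
  have hn : (n : ℝ) ≠ 0 := Nat.cast_ne_zero.mpr (NeZero.ne n)
  have hm' : (m : ℝ) ≠ 0 := Nat.cast_ne_zero.mpr hm.ne'
  set W : Fin n → Ω → ℝ := fun i ω => U i ω * V i ω
  let G : (Fin n → ℝ × ℝ) → Fin n → ℝ := fun y i =>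
    (y i).1 * (y i).2 - (n : ℝ)⁻¹ * ∑ j, (y j).1 * (y j).2
  set D : Ω → Fin n → ℝ := fun ω i => W i ω - (n : ℝ)⁻¹ * ∑ j, W j ω
  have hmul : Measurable fun p : ℝ × ℝ => p.1 * p.2 := by fun_prop
  have hW2 : ∀ i, MemLp (W i) 2 μ := fun i => (hV4 i).mul' (hU4 i)
  have hD2 : ∀ i, MemLp (fun ω => D ω i) 2 μ := fun i =>
    (hW2 i).sub ((memLp_finsetSum _ fun j _ => hW2 j).const_mul _)
  have hT_eq : T = fun ω => (Fintype.card (Fin m) : ℝ)⁻¹ * ∑ t, D ω (idx t ω) := by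
    ext ω
    rw [hT, mulVec_dotProduct_mulVec_of_eq_ite (hPm ω), Real.sq_sqrt (by positivity)]
    simp only [dotProduct, D, W, Finset.sum_sub_distrib, Finset.sum_const, Finset.card_univ,
      Fintype.card_fin, nsmul_eq_mul]
    field_simp
  have hsum : ∀ ω, ∑ i, D ω i = 0 := fun ω => by
    simp only [D, Finset.sum_sub_distrib, Finset.sum_const, Finset.card_univ, Fintype.card_fin,
      nsmul_eq_mul]
    field_simp
    ring
  have hsample : ∫ ω, ∑ i, D ω i ^ 2 ∂μ = ((n : ℝ) - 1) * variance (W 0) μ := by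
    simpa only [Fintype.card_fin] using integral_sum_sq_sub_mean_eq 0 hW2
      (fun i j hij => (hUV_indep.indepFun hij).comp hmul hmul) fun i => (hUV_ident i).comp hmul
  rw [hT_eq, variance_sampling_mean_of_sum_eq_zero hidx_meas
      (fun t i => by rw [Fintype.card_fin, measureReal_def, ← one_div]; exact hp t i)
      (fun t t' h => hiid t t' h) (aemeasurable_pi_lambda _ fun i => (hD2 i).aemeasurable) hD2
      (hindep_data.comp (ψ := G) measurable_id (by fun_prop)) hsum, hsample]
  simp only [Fintype.card_fin, W]
  field_simp

/-- **Mean and variance of the sketching error under random sampling with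
replacement.**  `(U_i, V_i)` are i.i.d. pairs with finite fourth moments,
independent of the sketch `Π = √(n/m)(ι_{k₁},…,ι_{k_m})ᵀ` whose i.i.d. row
indices are uniform on `[n]` (`p_i = 1/n`).  Then
`Var[n⁻¹(UᵀΠᵀΠV − UᵀV)] = ((n−1)/n) · (1/m) · Var(U₁V₁)`. -/
theorem uniform_rs_sketching_error_variance
    {Ω : Type*} [MeasurableSpace Ω] (μ : Measure Ω) [IsProbabilityMeasure μ]
    (m n : ℕ) (hm : 0 < m) [NeZero n]
    (idx : Fin m → Ω → Fin n) (hidx_meas : ∀ t, Measurable (idx t))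
    (hp : ∀ t i, (μ {ω | idx t ω = i}).toReal = 1 / n)
    (hiid : ∀ t t', t ≠ t' → IndepFun (idx t) (idx t') μ)
    (U V : Fin n → Ω → ℝ)
    (hU_meas : ∀ i, Measurable (U i)) (hV_meas : ∀ i, Measurable (V i))
    (hUV_indep : iIndepFun (fun i ω => (U i ω, V i ω)) μ)
    (hUV_ident : ∀ i, IdentDistrib (fun ω => (U i ω, V i ω))
      (fun ω => (U 0 ω, V 0 ω)) μ μ)
    (hU4 : ∀ i, MemLp (U i) 4 μ) (hV4 : ∀ i, MemLp (V i) 4 μ)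
    (hindep_data : IndepFun (fun ω (t : Fin m) => idx t ω)
      (fun ω (i : Fin n) => (U i ω, V i ω)) μ)
    (Pm : Ω → Matrix (Fin m) (Fin n) ℝ)
    (hPm : ∀ ω t i, Pm ω t i = if idx t ω = i then Real.sqrt ((n : ℝ) / m) else 0)
    (T : Ω → ℝ)
    (hT : ∀ ω, T ω = (n : ℝ)⁻¹ *
      ((Pm ω *ᵥ fun i => U i ω) ⬝ᵥ (Pm ω *ᵥ fun i => V i ω)
        - (fun i => U i ω) ⬝ᵥ (fun i => V i ω))) :
    variance T μ =
      (((n : ℝ) - 1) / n) * (1 / m) * variance (fun ω => U 0 ω * V 0 ω) μ :=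
  uniform_rs_sketching_error_variance_general μ m n hm idx hidx_meas hp hiid U V hUV_indep hUV_ident
    hU4 hV4 hindep_data Pm hPm T hT
end

section
/- Let Π satisfy the RP moment conditions with i.i.d. columns and let (U_i,V_i) be i.i.d. with finite fourth moments, independent of Π. Define H as above and G(w₁,w₂) = E[H(W,w₁)H(W,w₂)] where W is an independent copy. Then E[G(W_i,W_j)²] = O(m^{−3}) for i ≠ j. -/
open MeasureTheory ProbabilityTheory Matrix

/-!
The kernel factors as `H(w₁, w₂) = (u₁ v₂ + u₂ v₁) (π₁ ⬝ᵥ π₂)`. Averaging over the independent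
copy `W = (U₀, V₀, π₀)`, independence of `Π` from the data and `E[π₀ π₀ᵀ] = I / m` give
`G(W_i, W_j) = m⁻¹ (π_i ⬝ᵥ π_j) κ(W_i, W_j)`, where `κ(w, w') = E[(U₀ v + u V₀)(U₀ v' + u' V₀)]`
is a bilinear form whose coefficients are second moments of the data. Squaring and using the
independence of `Π` and the data once more, `E[G²] = m⁻² E[(π_i ⬝ᵥ π_j)²] E[κ(W_i, W_j)²]`. The
fourth-moment conditions give `E[(π_i ⬝ᵥ π_j)²] = m ⋅ m⁻² = m⁻¹`, and `κ(w, w')² ≲ |w|² |w'|²`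
bounds `E[κ(W_i, W_j)²]` by `(E|W₀|²)²` since `W_i` and `W_j` are independent copies of `W₀`.
-/

lemma sq_bilinForm_le (a b c u v u' v' : ℝ) :
    (a * (v * v') + c * (v * u' + u * v') + b * (u * u')) ^ 2
      ≤ 4 * (a ^ 2 + b ^ 2 + c ^ 2) * ((u ^ 2 + v ^ 2) * (u' ^ 2 + v' ^ 2)) := by
  have four_terms : ∀ x y z t : ℝ, (x + y + z + t) ^ 2 ≤ 4 * (x ^ 2 + y ^ 2 + z ^ 2 + t ^ 2) :=
    fun x y z t => by
      nlinarith [sq_nonneg (x - y), sq_nonneg (x - z), sq_nonneg (x - t), sq_nonneg (y - z),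
        sq_nonneg (y - t), sq_nonneg (z - t)]
  calc _ = (a * (v * v') + c * (v * u') + c * (u * v') + b * (u * u')) ^ 2 := by ring
    _ ≤ 4 * ((a * (v * v')) ^ 2 + (c * (v * u')) ^ 2 + (c * (u * v')) ^ 2
          + (b * (u * u')) ^ 2) := four_terms _ _ _ _
    _ ≤ _ := by
      nlinarith [mul_nonneg (sq_nonneg (v * v')) (add_nonneg (sq_nonneg b) (sq_nonneg c)),
        mul_nonneg (sq_nonneg (v * u')) (add_nonneg (sq_nonneg a) (sq_nonneg b)),
        mul_nonneg (sq_nonneg (u * v')) (add_nonneg (sq_nonneg a) (sq_nonneg b)),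
        mul_nonneg (sq_nonneg (u * u')) (add_nonneg (sq_nonneg a) (sq_nonneg c))]

def cross (w₁ w₂ : ℝ × ℝ) : ℝ := w₁.1 * w₂.2 + w₂.1 * w₁.2

lemma sum_kernel_eq_cross_mul_dotProduct {ι : Type*} [Fintype ι] (u₁ v₁ u₂ v₂ : ℝ)
    (π₁ π₂ : ι → ℝ) :
    ∑ k, (u₁ * π₁ k * π₂ k * v₂ + u₂ * π₂ k * π₁ k * v₁)
      = cross (u₁, v₁) (u₂, v₂) * (π₁ ⬝ᵥ π₂) := by
  simp only [cross, dotProduct, Finset.mul_sum]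
  exact Finset.sum_congr rfl fun k _ => by ring

section SecondMoments

variable {Ω : Type*} [MeasurableSpace Ω] {μ : Measure Ω}

/-- The Bochner integral of a non-integrable function is `0`, so a moment condition prescribing
a nonzero value carries integrability with it. -/
lemma memLp_two_of_integral_sq_ne_zero {f : Ω → ℝ} (hf : AEStronglyMeasurable f μ)
    (h : ∫ ω, f ω ^ 2 ∂μ ≠ 0) : MemLp f 2 μ :=
  (memLp_two_iff_integrable_sq hf).2 (Integrable.of_integral_ne_zero h)

lemma integral_sum_mul_sum_of_orthogonal {ι : Type*} [Fintype ι] {Z Z' : ι → Ω → ℝ}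
    (hZ : ∀ k, MemLp (Z k) 2 μ) (hZ' : ∀ k, MemLp (Z' k) 2 μ)
    (horth : ∀ k l, k ≠ l → ∫ ω, Z k ω * Z' l ω ∂μ = 0) :
    ∫ ω, (∑ k, Z k ω) * (∑ l, Z' l ω) ∂μ = ∑ k, ∫ ω, Z k ω * Z' k ω ∂μ := by
  have hint : ∀ k l, Integrable (fun ω => Z k ω * Z' l ω) μ := fun k l =>
    (hZ k).integrable_mul (hZ' l)
  simp_rw [Finset.sum_mul_sum]
  rw [integral_finsetSum _ fun k _ => integrable_finsetSum _ fun l _ => hint k l]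
  refine Finset.sum_congr rfl fun k _ => ?_
  rw [integral_finsetSum _ fun l _ => hint k l]
  exact Finset.sum_eq_single k (fun l _ hlk => horth k l hlk.symm) (by simp)

lemma integral_dotProduct_mul_dotProduct {ι : Type*} [Fintype ι] {X : Ω → ι → ℝ} {s : ℝ}
    (hX : ∀ k, MemLp (fun ω => X ω k) 2 μ) (hdiag : ∀ k, ∫ ω, X ω k ^ 2 ∂μ = s)
    (hoff : ∀ k l, k ≠ l → ∫ ω, X ω k * X ω l ∂μ = 0) (x y : ι → ℝ) :
    ∫ ω, (X ω ⬝ᵥ x) * (X ω ⬝ᵥ y) ∂μ = s * (x ⬝ᵥ y) := by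
  have hcomp : ∀ k l, ∫ ω, X ω k * x k * (X ω l * y l) ∂μ
      = (∫ ω, X ω k * X ω l ∂μ) * (x k * y l) := fun k l => by
    rw [← integral_mul_const]
    exact integral_congr_ae (Filter.Eventually.of_forall fun ω => by ring)
  simp only [dotProduct]
  rw [integral_sum_mul_sum_of_orthogonal (fun k => (hX k).mul_const (x k))
    (fun k => (hX k).mul_const (y k)) (fun k l hkl => by simp [hcomp, hoff k l hkl])]
  simp only [hcomp, ← sq, hdiag, Finset.mul_sum]

lemma integral_dotProduct_sq {ι : Type*} [Fintype ι] {X Y : Ω → ι → ℝ}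
    (hXY : ∀ k, MemLp (fun ω => X ω k * Y ω k) 2 μ)
    (hoff : ∀ k l, k ≠ l → ∫ ω, X ω k * Y ω k * X ω l * Y ω l ∂μ = 0) :
    ∫ ω, (X ω ⬝ᵥ Y ω) ^ 2 ∂μ = ∑ k, ∫ ω, X ω k ^ 2 * Y ω k ^ 2 ∂μ := by
  simp only [sq, dotProduct]
  rw [integral_sum_mul_sum_of_orthogonal hXY hXY fun k l hkl => by
    rw [← hoff k l hkl]; simp only [mul_assoc]]
  simp only [mul_mul_mul_comm]

lemma integral_dotProduct_col_sq {m n : ℕ} {P : Ω → Matrix (Fin m) (Fin n) ℝ}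
    (hP : ∀ k i, Measurable fun ω => P ω k i) {i j : Fin n}
    (h4 : ∀ k, ∫ ω, P ω k i ^ 2 * P ω k j ^ 2 ∂μ = 1 / (m : ℝ) ^ 2)
    (h4c : ∀ k l, k ≠ l → ∫ ω, P ω k i * P ω k j * P ω l i * P ω l j ∂μ = 0) :
    ∫ ω, ((fun k => P ω k i) ⬝ᵥ fun k => P ω k j) ^ 2 ∂μ = 1 / m := by
  have hmem : ∀ k, MemLp (fun ω => P ω k i * P ω k j) 2 μ := fun k =>
    memLp_two_of_integral_sq_ne_zero ((hP k i).mul (hP k j)).aestronglyMeasurable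
      (by simp_rw [mul_pow]; rw [h4 k]; have := k.pos; positivity)
  rw [integral_dotProduct_sq hmem h4c]
  simp only [h4, Finset.sum_const, Finset.card_univ, Fintype.card_fin, nsmul_eq_mul]
  rcases Nat.eq_zero_or_pos m with rfl | hm
  · simp
  · field_simp

end SecondMoments

section CrossMoment

variable {Ω : Type*} [MeasurableSpace Ω] {μ : Measure Ω} {A B : Ω → ℝ}

/-- The factor `κ` of the decomposition `G(w, w') = m⁻¹ (π ⬝ᵥ π') κ(w, w')`, for the data
`(A, B) = (U₀, V₀)`. -/
noncomputable def crossMoment (μ : Measure Ω) (A B : Ω → ℝ) (w w' : ℝ × ℝ) : ℝ :=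
  ∫ ω, cross (A ω, B ω) w * cross (A ω, B ω) w' ∂μ

lemma crossMoment_eq (hA : MemLp A 2 μ) (hB : MemLp B 2 μ) (w w' : ℝ × ℝ) :
    crossMoment μ A B w w' = (∫ ω, A ω ^ 2 ∂μ) * (w.2 * w'.2)
      + (∫ ω, A ω * B ω ∂μ) * (w.2 * w'.1 + w.1 * w'.2)
      + (∫ ω, B ω ^ 2 ∂μ) * (w.1 * w'.1) := by
  have hAB : Integrable (fun ω => A ω * B ω) μ := hA.integrable_mul hB
  rw [crossMoment, integral_congr_ae (g := fun ω => A ω ^ 2 * (w.2 * w'.2)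
      + A ω * B ω * (w.2 * w'.1 + w.1 * w'.2) + B ω ^ 2 * (w.1 * w'.1))
      (Filter.Eventually.of_forall fun ω => by simp only [cross]; ring),
    integral_add (f := fun ω => A ω ^ 2 * (w.2 * w'.2)
        + A ω * B ω * (w.2 * w'.1 + w.1 * w'.2))
      ((hA.integrable_sq.mul_const _).add (hAB.mul_const _)) (hB.integrable_sq.mul_const _),
    integral_add (hA.integrable_sq.mul_const _) (hAB.mul_const _),
    integral_mul_const, integral_mul_const, integral_mul_const]

lemma continuous_crossMoment (hA : MemLp A 2 μ) (hB : MemLp B 2 μ) :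
    Continuous fun p : (ℝ × ℝ) × (ℝ × ℝ) => crossMoment μ A B p.1 p.2 := by
  simp only [crossMoment_eq hA hB]
  fun_prop

lemma crossMoment_sq_le (hA : MemLp A 2 μ) (hB : MemLp B 2 μ) (w w' : ℝ × ℝ) :
    crossMoment μ A B w w' ^ 2 ≤ 4 * ((∫ ω, A ω ^ 2 ∂μ) ^ 2 + (∫ ω, B ω ^ 2 ∂μ) ^ 2
      + (∫ ω, A ω * B ω ∂μ) ^ 2) * ((w.1 ^ 2 + w.2 ^ 2) * (w'.1 ^ 2 + w'.2 ^ 2)) := by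
  rw [crossMoment_eq hA hB]
  exact sq_bilinForm_le _ _ _ _ _ _ _

lemma integral_crossMoment_sq_le {Ω' : Type*} [MeasurableSpace Ω'] {ν : Measure Ω'}
    {W₁ W₂ : Ω' → ℝ × ℝ} (hA : MemLp A 2 μ) (hB : MemLp B 2 μ)
    (hW : IndepFun W₁ W₂ ν) (hW₁ : IdentDistrib W₁ (fun ω => (A ω, B ω)) ν μ)
    (hW₂ : IdentDistrib W₂ (fun ω => (A ω, B ω)) ν μ) :
    ∫ ω, crossMoment μ A B (W₁ ω) (W₂ ω) ^ 2 ∂ν ≤ 4 * ((∫ ω, A ω ^ 2 ∂μ) ^ 2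
      + (∫ ω, B ω ^ 2 ∂μ) ^ 2 + (∫ ω, A ω * B ω ∂μ) ^ 2)
      * (∫ ω, (A ω ^ 2 + B ω ^ 2) ∂μ) ^ 2 := by
  set N : ℝ × ℝ → ℝ := fun w => w.1 ^ 2 + w.2 ^ 2
  have hN : Measurable N := by fun_prop
  have hNint : Integrable (fun ω => A ω ^ 2 + B ω ^ 2) μ :=
    hA.integrable_sq.add hB.integrable_sq
  have hNW₁ : ∫ ω, N (W₁ ω) ∂ν = ∫ ω, (A ω ^ 2 + B ω ^ 2) ∂μ := (hW₁.comp hN).integral_eq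
  have hNW₂ : ∫ ω, N (W₂ ω) ∂ν = ∫ ω, (A ω ^ 2 + B ω ^ 2) ∂μ := (hW₂.comp hN).integral_eq
  have hNW : IndepFun (N ∘ W₁) (N ∘ W₂) ν := hW.comp hN hN
  have hint : Integrable (fun ω => N (W₁ ω) * N (W₂ ω)) ν :=
    hNW.integrable_mul ((hW₁.comp hN).integrable_iff.2 hNint)
      ((hW₂.comp hN).integrable_iff.2 hNint)
  have hfac : ∫ ω, N (W₁ ω) * N (W₂ ω) ∂ν = (∫ ω, N (W₁ ω) ∂ν) * ∫ ω, N (W₂ ω) ∂ν :=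
    hNW.integral_fun_mul_eq_mul_integral
      (hN.comp_aemeasurable hW₁.aemeasurable_fst).aestronglyMeasurable
      (hN.comp_aemeasurable hW₂.aemeasurable_fst).aestronglyMeasurable
  calc ∫ ω, crossMoment μ A B (W₁ ω) (W₂ ω) ^ 2 ∂ν
      ≤ ∫ ω, 4 * ((∫ ω, A ω ^ 2 ∂μ) ^ 2 + (∫ ω, B ω ^ 2 ∂μ) ^ 2 + (∫ ω, A ω * B ω ∂μ) ^ 2)
          * (N (W₁ ω) * N (W₂ ω)) ∂ν :=
        integral_mono_of_nonneg (Filter.Eventually.of_forall fun _ => sq_nonneg _)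
          (hint.const_mul _) (Filter.Eventually.of_forall fun ω => crossMoment_sq_le hA hB _ _)
    _ = _ := by
      rw [integral_const_mul, hfac, hNW₁, hNW₂]
      ring

end CrossMoment

section Independence

variable {Ω : Type*} [MeasurableSpace Ω] {μ : Measure Ω}

lemma integral_cross_mul_dotProduct_mul {ι : Type*} [Fintype ι] {A B : Ω → ℝ} {X : Ω → ι → ℝ}
    {s : ℝ} (hA : AEMeasurable A μ) (hB : AEMeasurable B μ)
    (hX : ∀ k, MemLp (fun ω => X ω k) 2 μ) (hdiag : ∀ k, ∫ ω, X ω k ^ 2 ∂μ = s)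
    (hoff : ∀ k l, k ≠ l → ∫ ω, X ω k * X ω l ∂μ = 0)
    (hind : IndepFun (fun ω => (A ω, B ω)) X μ) (w w' : ℝ × ℝ) (x y : ι → ℝ) :
    ∫ ω, cross (A ω, B ω) w * (X ω ⬝ᵥ x) * (cross (A ω, B ω) w' * (X ω ⬝ᵥ y)) ∂μ
      = s * (x ⬝ᵥ y) * crossMoment μ A B w w' := by
  have hXm : AEMeasurable X μ :=
    aemeasurable_pi_lambda _ fun k => (hX k).aestronglyMeasurable.aemeasurable
  rw [integral_congr_ae (g := fun ω => cross (A ω, B ω) w * cross (A ω, B ω) w'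
      * ((X ω ⬝ᵥ x) * (X ω ⬝ᵥ y))) (Filter.Eventually.of_forall fun ω => by ring),
    hind.integral_fun_comp_mul_comp (f := fun d => cross d w * cross d w')
      (g := fun v => (v ⬝ᵥ x) * (v ⬝ᵥ y)) (hA.prodMk hB) hXm
      (by unfold cross; fun_prop) (by unfold dotProduct; fun_prop),
    integral_dotProduct_mul_dotProduct hX hdiag hoff, crossMoment]
  ring

lemma integral_sq_const_mul_mul_of_indepFun {T K : Ω → ℝ}
    (hTK : IndepFun T K μ) (hT : AEStronglyMeasurable T μ) (hK : AEStronglyMeasurable K μ)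
    (c : ℝ) :
    ∫ ω, (c * T ω * K ω) ^ 2 ∂μ = c ^ 2 * (∫ ω, T ω ^ 2 ∂μ) * ∫ ω, K ω ^ 2 ∂μ := by
  have hsq : Measurable fun x : ℝ => x ^ 2 := measurable_id.pow_const 2
  have hfac : ∫ ω, T ω ^ 2 * K ω ^ 2 ∂μ = (∫ ω, T ω ^ 2 ∂μ) * ∫ ω, K ω ^ 2 ∂μ :=
    (hTK.comp hsq hsq).integral_fun_mul_eq_mul_integral (hT.pow 2) (hK.pow 2)
  rw [integral_congr_ae (g := fun ω => c ^ 2 * (T ω ^ 2 * K ω ^ 2))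
      (Filter.Eventually.of_forall fun ω => by ring), integral_const_mul, hfac, mul_assoc]

/-- `E[Y_k Y_l]² = E[X_{ik} X_{il}] E[X_{jk} X_{jl}] = E[X_{ik} X_{jk} X_{il} X_{jl}]` for two
independent copies `X_i`, `X_j` of `Y`. -/
lemma integral_mul_eq_zero_of_iIndepFun_of_identDistrib
    {ι κ : Type*} {X : κ → Ω → ι → ℝ} {Y : Ω → ι → ℝ} (hX : iIndepFun X μ)
    (hXY : ∀ i, IdentDistrib (X i) Y μ μ) {i j : κ} (hij : i ≠ j) {k l : ι}
    (h : ∫ ω, X i ω k * X j ω k * X i ω l * X j ω l ∂μ = 0) :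
    ∫ ω, Y ω k * Y ω l ∂μ = 0 := by
  have hkl : Measurable fun v : ι → ℝ => v k * v l := by fun_prop
  have hfac : ∫ ω, X i ω k * X i ω l * (X j ω k * X j ω l) ∂μ
      = (∫ ω, X i ω k * X i ω l ∂μ) * ∫ ω, X j ω k * X j ω l ∂μ :=
    ((hX.indepFun hij).comp hkl hkl).integral_fun_mul_eq_mul_integral
      (hkl.comp_aemeasurable (hXY i).aemeasurable_fst).aestronglyMeasurable
      (hkl.comp_aemeasurable (hXY j).aemeasurable_fst).aestronglyMeasurable
  have hi : ∫ ω, X i ω k * X i ω l ∂μ = ∫ ω, Y ω k * Y ω l ∂μ := ((hXY i).comp hkl).integral_eq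
  have hj : ∫ ω, X j ω k * X j ω l ∂μ = ∫ ω, Y ω k * Y ω l ∂μ := ((hXY j).comp hkl).integral_eq
  rw [hi, hj] at hfac
  refine mul_self_eq_zero.1 (hfac.symm.trans ?_)
  rw [← h]
  exact integral_congr_ae (Filter.Eventually.of_forall fun ω => by ring)

end Independence

/-- **`E[G(W_i,W_j)²] = O(m⁻³)`.**
For the degenerate kernel `H(w₁,w₂) = Σ_k (u₁π_{k1}π_{k2}v₂ + u₂π_{k2}π_{k1}v₁)`
and `G(w₁,w₂) = E[H(W,w₁)H(W,w₂)]` (with `W` an independent copy, realized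
here through the i.i.d. observation `W₀ = (U₀, V₀, Π-column 0)`), if `Π`
satisfies the RP moment conditions with i.i.d. columns and is independent of
the i.i.d. data `(U_i, V_i)` having finite fourth moments, then there is a
constant `C` (uniform in `m`, `Π`, `i`, `j`) with
`E[G(W_i,W_j)²] ≤ C m⁻³` for all `i ≠ j`. -/
theorem rp_G_second_moment_bound
    {Ω : Type*} [MeasurableSpace Ω] (μ : Measure Ω) [IsProbabilityMeasure μ]
    (n : ℕ) [NeZero n]
    (U V : Fin n → Ω → ℝ)
    (hU_meas : ∀ i, Measurable (U i)) (hV_meas : ∀ i, Measurable (V i))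
    (hUV_indep : iIndepFun (fun i ω => (U i ω, V i ω)) μ)
    (hUV_ident : ∀ i, IdentDistrib (fun ω => (U i ω, V i ω))
      (fun ω => (U 0 ω, V 0 ω)) μ μ)
    (hU4 : ∀ i, MemLp (U i) 4 μ) (hV4 : ∀ i, MemLp (V i) 4 μ) :
    ∃ C : ℝ, ∀ (m : ℕ), 0 < m →
      ∀ (Pm : Ω → Matrix (Fin m) (Fin n) ℝ),
      (∀ k i, Measurable fun ω => Pm ω k i) →
      (∀ k i, (∫ ω, Pm ω k i ∂μ) = 0) →
      (∀ k i, (∫ ω, (Pm ω k i) ^ 2 ∂μ) = 1 / m) →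
      (∀ (k : Fin m) (i j : Fin n), i ≠ j →
        (∫ ω, Pm ω k i * Pm ω k j ∂μ) = 0) →
      (∀ (k : Fin m) (i j : Fin n), i ≠ j →
        (∫ ω, (Pm ω k i) ^ 2 * (Pm ω k j) ^ 2 ∂μ) = 1 / (m : ℝ) ^ 2) →
      (∀ (k l : Fin m) (i j r t : Fin n), k ≠ l → i ≠ j → r ≠ t →
        (∫ ω, Pm ω k i * Pm ω k j * Pm ω l r * Pm ω l t ∂μ) = 0) →
      iIndepFun
        (fun (i : Fin n) ω (k : Fin m) => Pm ω k i) μ →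
      (∀ i : Fin n, IdentDistrib (fun ω (k : Fin m) => Pm ω k i)
        (fun ω (k : Fin m) => Pm ω k 0) μ μ) →
      IndepFun (fun ω (k : Fin m) (i : Fin n) => Pm ω k i)
        (fun ω (i : Fin n) => (U i ω, V i ω)) μ →
      ∀ i j : Fin n, i ≠ j →
        (∫ ω, (∫ ω', (∑ k, (U 0 ω' * Pm ω' k 0 * Pm ω k i * V i ω
              + U i ω * Pm ω k i * Pm ω' k 0 * V 0 ω'))
            * (∑ k, (U 0 ω' * Pm ω' k 0 * Pm ω k j * V j ω
              + U j ω * Pm ω k j * Pm ω' k 0 * V 0 ω')) ∂μ) ^ 2 ∂μ)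
          ≤ C / (m : ℝ) ^ 3 := by
  have hU2 : MemLp (U 0) 2 μ := (hU4 0).mono_exponent (by norm_num)
  have hV2 : MemLp (V 0) 2 μ := (hV4 0).mono_exponent (by norm_num)
  refine ⟨4 * ((∫ ω, U 0 ω ^ 2 ∂μ) ^ 2 + (∫ ω, V 0 ω ^ 2 ∂μ) ^ 2
    + (∫ ω, U 0 ω * V 0 ω ∂μ) ^ 2) * (∫ ω, (U 0 ω ^ 2 + V 0 ω ^ 2) ∂μ) ^ 2, ?_⟩
  intro m hm Pm hPmeas _ hP2 _ hP4 hP4c hPcols hPid hPUV i j hij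
  have hcol : ∀ k, MemLp (fun ω => Pm ω k 0) 2 μ := fun k =>
    memLp_two_of_integral_sq_ne_zero (hPmeas k 0).aestronglyMeasurable (by rw [hP2]; positivity)
  have hcol_off : ∀ k l, k ≠ l → ∫ ω, Pm ω k 0 * Pm ω l 0 ∂μ = 0 := fun k l hkl =>
    integral_mul_eq_zero_of_iIndepFun_of_identDistrib hPcols hPid hij
      (hP4c k l i j i j hkl hij hij)
  have hW₀ : IndepFun (fun ω => (U 0 ω, V 0 ω)) (fun ω k => Pm ω k 0) μ :=
    (hPUV.comp (φ := fun M k => M k 0) (ψ := fun w => w 0) (by fun_prop) (by fun_prop)).symm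
  simp only [sum_kernel_eq_cross_mul_dotProduct, integral_cross_mul_dotProduct_mul
    (hU_meas 0).aemeasurable (hV_meas 0).aemeasurable hcol (hP2 · 0) hcol_off hW₀]
  have hT : Measurable fun M : Fin m → Fin n → ℝ => (fun k => M k i) ⬝ᵥ fun k => M k j := by
    unfold dotProduct; fun_prop
  have hK : Continuous fun w : Fin n → ℝ × ℝ => crossMoment μ (U 0) (V 0) (w i) (w j) :=
    (continuous_crossMoment hU2 hV2).comp₂ (continuous_apply i) (continuous_apply j)
  have hTK : IndepFun (fun ω => (fun k => Pm ω k i) ⬝ᵥ fun k => Pm ω k j)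
      (fun ω => crossMoment μ (U 0) (V 0) (U i ω, V i ω) (U j ω, V j ω)) μ :=
    hPUV.comp hT hK.measurable
  have hPm : Measurable fun ω (k : Fin m) (r : Fin n) => Pm ω k r := by fun_prop
  have hW : Measurable fun ω r => (U r ω, V r ω) := by fun_prop
  rw [integral_sq_const_mul_mul_of_indepFun hTK (hT.comp hPm).aestronglyMeasurable
      (hK.measurable.comp hW).aestronglyMeasurable,
    integral_dotProduct_col_sq hPmeas (hP4 · i j hij) (hP4c · · i j i j · hij hij)]
  field_simp
  exact integral_crossMoment_sq_le hU2 hV2 (hUV_indep.indepFun hij)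
    (hUV_ident i) (hUV_ident j)
end

section
/- Let Ã₁ = U_ZᵀΠᵀΠU_X, Â₁ = U_ZᵀU_X, Ã₂ = (U_ZᵀΠᵀΠU_Z)^{−1}, Â₂ = I. If ‖U_ZᵀΠᵀΠU_Z − I_q‖₂ ≤ ε₁ and ‖Ã₁ − Â₁‖₂ ≤ ε₂ with ε₁, ε₂ ∈ (0,1/2), then ‖Ã₁ᵀÃ₂Ã₁ − Â₁ᵀÂ₁‖₂ ≤ (ε₁ + ε₂(ε₂+2))/(1 − ε₁). -/
/-! Write `N = Ã₂` and `D = Ã₁ - Â₁`. Since `‖U_ZᵀΠᵀΠU_Z - I‖ ≤ ε₁ < 1`, the Neumann series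
makes `U_ZᵀΠᵀΠU_Z` invertible with `‖N‖ ≤ 1/(1 - ε₁)`, and `N - I = N (I - U_ZᵀΠᵀΠU_Z)` gives
`‖N - I‖ ≤ ε₁/(1 - ε₁)`. Then
`Ã₁ᵀ N Ã₁ - Â₁ᵀ Â₁ = Dᵀ N Ã₁ + Â₁ᵀ N D + Â₁ᵀ (N - I) Â₁`,
and `‖Â₁‖ ≤ 1`, `‖Ã₁‖ ≤ 1 + ε₂` bound the three terms by `ε₂(1 + ε₂)`, `ε₂` and `ε₁`,
each divided by `1 - ε₁`. -/

open Matrix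

/-- Euclidean norm of a finitely supported real vector. -/
noncomputable def euclNorm {ι : Type*} [Fintype ι] (v : ι → ℝ) : ℝ :=
  Real.sqrt (∑ i, v i ^ 2)

/-- Spectral (ℓ²-operator) norm of a real matrix. -/
noncomputable def specNorm {ι κ : Type*} [Fintype ι] [Fintype κ]
    (A : Matrix ι κ ℝ) : ℝ :=
  sSup ((fun x => euclNorm (A *ᵥ x)) '' {x | euclNorm x = 1})

open scoped Matrix.Norms.L2Operator

section Neumann

variable {R : Type*} [NormedRing R] {x : R} {ε : ℝ}

theorem norm_inverse_sub_one_le_mul (hx : IsUnit x) :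
    ‖Ring.inverse x - 1‖ ≤ ‖Ring.inverse x‖ * ‖x - 1‖ := by
  have hfactor : Ring.inverse x - 1 = Ring.inverse x * -(x - 1) := by
    rw [mul_neg, mul_sub, Ring.inverse_mul_cancel x hx, mul_one, neg_sub]
  rw [hfactor, ← norm_neg (x - 1)]
  exact norm_mul_le _ _

variable [HasSummableGeomSeries R]

theorem isUnit_of_norm_sub_one_lt_one (h : ‖x - 1‖ < 1) : IsUnit x := by
  simpa using isUnit_one_sub_of_norm_lt_one (x := 1 - x) (by rwa [norm_sub_rev])

theorem norm_inverse_le_of_norm_sub_one_le (h1 : ‖(1 : R)‖ ≤ 1) (hx : ‖x - 1‖ ≤ ε)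
    (hε : ε < 1) : ‖Ring.inverse x‖ ≤ (1 - ε)⁻¹ := by
  have hsub := norm_inverse_sub_one_le_mul (isUnit_of_norm_sub_one_lt_one (hx.trans_lt hε))
  have htri : ‖Ring.inverse x‖ ≤ ‖Ring.inverse x - 1‖ + ‖(1 : R)‖ := norm_le_norm_sub_add _ _
  rw [← one_div, le_div_iff₀ (sub_pos.2 hε)]
  nlinarith [norm_nonneg (Ring.inverse x)]

theorem norm_inverse_sub_one_le_of_norm_sub_one_le (h1 : ‖(1 : R)‖ ≤ 1) (hx : ‖x - 1‖ ≤ ε)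
    (hε : ε < 1) : ‖Ring.inverse x - 1‖ ≤ ε / (1 - ε) :=
  calc ‖Ring.inverse x - 1‖
      ≤ ‖Ring.inverse x‖ * ‖x - 1‖ :=
        norm_inverse_sub_one_le_mul (isUnit_of_norm_sub_one_lt_one (hx.trans_lt hε))
    _ ≤ (1 - ε)⁻¹ * ε := by
        gcongr
        exact norm_inverse_le_of_norm_sub_one_le h1 hx hε
    _ = ε / (1 - ε) := inv_mul_eq_div _ _

end Neumann

theorem euclNorm_eq_norm_toLp {ι : Type*} [Fintype ι] (v : ι → ℝ) :
    euclNorm v = ‖WithLp.toLp 2 v‖ := by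
  simp [EuclideanSpace.norm_eq, euclNorm, sq_abs]

namespace Matrix

variable {ι κ : Type*} [Fintype ι] [Fintype κ] [DecidableEq κ]

theorem specNorm_eq_l2_opNorm (A : Matrix ι κ ℝ) : specNorm A = ‖A‖ := by
  have hsphere :
      {v | euclNorm v = 1} = WithLp.ofLp '' Metric.sphere (0 : EuclideanSpace ℝ κ) 1 := by
    rw [Set.image_eq_preimage_of_inverse (WithLp.toLp_ofLp 2) (WithLp.ofLp_toLp 2)]
    ext v
    simp [euclNorm_eq_norm_toLp]
  rw [specNorm, l2_opNorm_def, ← ContinuousLinearMap.sSup_sphere_eq_norm, hsphere,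
    Set.image_image]
  exact congrArg sSup (Set.image_congr fun y _ => euclNorm_eq_norm_toLp _)

theorem l2_opNorm_one_le : ‖(1 : Matrix κ κ ℝ)‖ ≤ 1 := by
  rw [cstar_norm_def, map_one]
  exact ContinuousLinearMap.norm_id_le

theorem l2_opNorm_le_one_of_transpose_mul_self_eq_one {A : Matrix ι κ ℝ} (h : Aᵀ * A = 1) :
    ‖A‖ ≤ 1 := by
  have hsq : ‖A‖ * ‖A‖ = ‖(1 : Matrix κ κ ℝ)‖ := by
    rw [← h, ← conjTranspose_eq_transpose_of_trivial, l2_opNorm_conjTranspose_mul_self]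
  nlinarith [norm_nonneg A, l2_opNorm_one_le (κ := κ)]

variable [DecidableEq ι]

theorem l2_opNorm_transpose (A : Matrix ι κ ℝ) : ‖Aᵀ‖ = ‖A‖ := by
  rw [← conjTranspose_eq_transpose_of_trivial, l2_opNorm_conjTranspose]

theorem l2_opNorm_transpose_mul_mul_le (X : Matrix κ ι ℝ) (Y : Matrix κ κ ℝ)
    (Z : Matrix κ ι ℝ) : ‖Xᵀ * Y * Z‖ ≤ ‖X‖ * ‖Y‖ * ‖Z‖ :=
  calc ‖Xᵀ * Y * Z‖ ≤ ‖Xᵀ * Y‖ * ‖Z‖ := l2_opNorm_mul _ _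
    _ ≤ ‖X‖ * ‖Y‖ * ‖Z‖ := by
      gcongr
      rw [← l2_opNorm_transpose X]
      exact l2_opNorm_mul _ _

theorem l2_opNorm_transpose_mul_mul_sub_le (A B : Matrix κ ι ℝ) (N : Matrix κ κ ℝ)
    (hB : ‖B‖ ≤ 1) :
    ‖Aᵀ * N * A - Bᵀ * B‖ ≤ ‖A - B‖ * ‖N‖ * (1 + ‖A - B‖) + ‖N‖ * ‖A - B‖ + ‖N - 1‖ := by
  have hsplit : Aᵀ * N * A - Bᵀ * B
      = (A - B)ᵀ * N * A + Bᵀ * N * (A - B) + Bᵀ * (N - 1) * B := by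
    simp only [transpose_sub, Matrix.sub_mul, Matrix.mul_sub, Matrix.mul_one]
    abel
  have hA : ‖A‖ ≤ 1 + ‖A - B‖ := by
    linarith [norm_le_norm_add_norm_sub' A B]
  rw [hsplit]
  calc _ ≤ ‖(A - B)ᵀ * N * A‖ + ‖Bᵀ * N * (A - B)‖ + ‖Bᵀ * (N - 1) * B‖ := norm_add₃_le
    _ ≤ ‖A - B‖ * ‖N‖ * ‖A‖ + ‖B‖ * ‖N‖ * ‖A - B‖ + ‖B‖ * ‖N - 1‖ * ‖B‖ := by
      gcongr <;> exact l2_opNorm_transpose_mul_mul_le _ _ _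
    _ ≤ ‖A - B‖ * ‖N‖ * (1 + ‖A - B‖) + 1 * ‖N‖ * ‖A - B‖ + 1 * ‖N - 1‖ * 1 := by
      gcongr
    _ = _ := by ring

end Matrix

theorem sketched_A_perturbation_bound_general
    (n p q m : ℕ)
    (UX : Matrix (Fin n) (Fin p) ℝ) (UZ : Matrix (Fin n) (Fin q) ℝ)
    (hUX : UXᵀ * UX = 1) (hUZ : UZᵀ * UZ = 1)
    (Pm : Matrix (Fin m) (Fin n) ℝ)
    (ε₁ ε₂ : ℝ) (hε₁ : ε₁ ∈ Set.Ioo (0 : ℝ) (1 / 2))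
    (h1 : specNorm (UZᵀ * Pmᵀ * Pm * UZ - 1) ≤ ε₁)
    (h2 : specNorm (UZᵀ * Pmᵀ * Pm * UX - UZᵀ * UX) ≤ ε₂) :
    specNorm ((UZᵀ * Pmᵀ * Pm * UX)ᵀ * (UZᵀ * Pmᵀ * Pm * UZ)⁻¹ *
        (UZᵀ * Pmᵀ * Pm * UX) - (UZᵀ * UX)ᵀ * (UZᵀ * UX))
      ≤ (ε₁ + ε₂ * (ε₂ + 2)) / (1 - ε₁) := by
  rw [specNorm_eq_l2_opNorm] at h1 h2 ⊢
  have hε₁_lt_one : ε₁ < 1 := by linarith [hε₁.2]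
  have hε₂ : 0 ≤ ε₂ := (norm_nonneg _).trans h2
  have hB : ‖UZᵀ * UX‖ ≤ 1 := by
    refine (l2_opNorm_mul _ _).trans ?_
    rw [l2_opNorm_transpose]
    exact mul_le_one₀ (l2_opNorm_le_one_of_transpose_mul_self_eq_one hUZ) (norm_nonneg _)
      (l2_opNorm_le_one_of_transpose_mul_self_eq_one hUX)
  have hN := norm_inverse_le_of_norm_sub_one_le l2_opNorm_one_le h1 hε₁_lt_one
  have hN1 := norm_inverse_sub_one_le_of_norm_sub_one_le l2_opNorm_one_le h1 hε₁_lt_one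
  rw [nonsing_inv_eq_ringInverse]
  calc _ ≤ _ := l2_opNorm_transpose_mul_mul_sub_le _ _ _ hB
    _ ≤ ε₂ * (1 - ε₁)⁻¹ * (1 + ε₂) + (1 - ε₁)⁻¹ * ε₂ + ε₁ / (1 - ε₁) := by gcongr
    _ = (ε₁ + ε₂ * (ε₂ + 2)) / (1 - ε₁) := by
      field_simp
      ring

/-- **Perturbation bound for `Ã₁ᵀÃ₂Ã₁`.**
Let `Ã₁ = U_ZᵀΠᵀΠU_X`, `Â₁ = U_ZᵀU_X`, `Ã₂ = (U_ZᵀΠᵀΠU_Z)⁻¹`, `Â₂ = I`.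
If `‖U_ZᵀΠᵀΠU_Z − I‖₂ ≤ ε₁` and `‖Ã₁ − Â₁‖₂ ≤ ε₂` with `ε₁, ε₂ ∈ (0,1/2)`,
then `‖Ã₁ᵀÃ₂Ã₁ − Â₁ᵀÂ₁‖₂ ≤ (ε₁ + ε₂(ε₂+2))/(1−ε₁)`. -/
theorem sketched_A_perturbation_bound
    (n p q m : ℕ)
    (UX : Matrix (Fin n) (Fin p) ℝ) (UZ : Matrix (Fin n) (Fin q) ℝ)
    (hUX : UXᵀ * UX = 1) (hUZ : UZᵀ * UZ = 1)
    (Pm : Matrix (Fin m) (Fin n) ℝ)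
    (ε₁ ε₂ : ℝ) (hε₁ : ε₁ ∈ Set.Ioo (0 : ℝ) (1 / 2))
    (hε₂ : ε₂ ∈ Set.Ioo (0 : ℝ) (1 / 2))
    (h1 : specNorm (UZᵀ * Pmᵀ * Pm * UZ - 1) ≤ ε₁)
    (h2 : specNorm (UZᵀ * Pmᵀ * Pm * UX - UZᵀ * UX) ≤ ε₂) :
    specNorm ((UZᵀ * Pmᵀ * Pm * UX)ᵀ * (UZᵀ * Pmᵀ * Pm * UZ)⁻¹ *
        (UZᵀ * Pmᵀ * Pm * UX) - (UZᵀ * UX)ᵀ * (UZᵀ * UX))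
      ≤ (ε₁ + ε₂ * (ε₂ + 2)) / (1 - ε₁) :=
  sketched_A_perturbation_bound_general n p q m UX UZ hUX hUZ Pm ε₁ ε₂ hε₁ h1 h2
end
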